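/- Given a dataset D_N = {x_1,...,x_N} drawn from p(x) and a minibatch B_M = {x_1,...,x_M} of M samples drawn i.i.d. uniformly from D_N, and a posterior that factorizes as q(z|x) = q(z_1|x) q(z_2|x), the following lower bound holds for n = 1 or 2: E_{q(z,x)}[ log q(z_n) ] >= E_{q(z,x)} [ log E_{r(B_M|x)} [ (1/(N M)) sum_{m=1}^M q(z_n | x_m) ] ], where r(B_M|x) is the distribution of a minibatch in which one element is fixed to x and the remaining M-1 elements are drawn i.i.d. uniformly from D_N. -/

import Mathlib

/-!
Pointwise, the minibatch estimate never exceeds the aggregate posterior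
`q(z) = N⁻¹ ∑ₓ' q(z | x')`: each of the `M` terms of a minibatch sum is at most
`∑ₓ' q(z | x')`, and the `N ^ (M - 1)` completions of the minibatch carry total mass one.
The bound then follows term by term from the monotonicity of `log`, since the estimate is
positive wherever the weight `q(z, x)` is.
-/

open Finset

theorem Finset.sum_comp_le_card_mul_sum {ι X : Type*} [Fintype ι] [Fintype X] {f : X → ℝ}
    (hf : ∀ x, 0 ≤ f x) (g : ι → X) :
    ∑ i, f (g i) ≤ Fintype.card ι * ∑ x, f x :=
  calc ∑ i, f (g i) ≤ ∑ _i : ι, ∑ x, f x :=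
        sum_le_sum fun i _ => single_le_sum (fun x _ => hf x) (mem_univ (g i))
    _ = Fintype.card ι * ∑ x, f x := by simp

theorem Real.mul_log_le_mul_log {w u v : ℝ} (hw : 0 ≤ w) (hu : w ≠ 0 → 0 < u) (huv : u ≤ v) :
    w * Real.log u ≤ w * Real.log v := by
  rcases hw.eq_or_lt with rfl | hw
  · simp
  · exact mul_le_mul_of_nonneg_left (Real.log_le_log (hu hw.ne') huv) hw.le

section Minibatch

variable {X : Type*} [Fintype X]

/-- The expectation over `r(B_M | x)` of `(N M)⁻¹ ∑ₘ f(x_m)`, where `M = M' + 1` and the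
minibatch is `x` followed by `M'` points drawn uniformly from `X`. -/
noncomputable def minibatchEstimate (M' : ℕ) (f : X → ℝ) (x : X) : ℝ :=
  ∑ rest : Fin M' → X, ((Fintype.card X : ℝ)⁻¹) ^ M' *
    (((Fintype.card X : ℝ) * (M' + 1 : ℝ))⁻¹ *
      ∑ m : Fin (M' + 1), f ((Fin.cons x rest : Fin (M' + 1) → X) m))

variable {f : X → ℝ}

theorem minibatchEstimate_le (M' : ℕ) (hf : ∀ x, 0 ≤ f x) (x : X) :
    minibatchEstimate M' f x ≤ (Fintype.card X : ℝ)⁻¹ * ∑ x', f x' := by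
  have hN : (Fintype.card X : ℝ) ≠ 0 := by
    exact_mod_cast (Fintype.card_pos_iff.2 ⟨x⟩).ne'
  calc minibatchEstimate M' f x
      ≤ ∑ _rest : Fin M' → X, ((Fintype.card X : ℝ)⁻¹) ^ M' *
          (((Fintype.card X : ℝ) * (M' + 1 : ℝ))⁻¹ * ((M' + 1 : ℝ) * ∑ x', f x')) := by
        refine sum_le_sum fun rest _ => ?_
        gcongr
        simpa using sum_comp_le_card_mul_sum hf (Fin.cons x rest : Fin (M' + 1) → X)
    _ = (Fintype.card X : ℝ)⁻¹ * ∑ x', f x' := by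
        simp only [sum_const, card_univ, Fintype.card_fun, Fintype.card_fin, nsmul_eq_mul]
        push_cast
        field_simp
        rw [← mul_pow, mul_one_div_cancel hN, one_pow, one_mul]

theorem minibatchEstimate_pos (M' : ℕ) (hf : ∀ x, 0 ≤ f x) {x : X} (hx : 0 < f x) :
    0 < minibatchEstimate M' f x := by
  have : Nonempty X := ⟨x⟩
  refine sum_pos (fun rest _ => ?_) univ_nonempty
  have hbatch : 0 < ∑ m : Fin (M' + 1), f ((Fin.cons x rest : Fin (M' + 1) → X) m) :=
    hx.trans_le (single_le_sum (f := fun m => f ((Fin.cons x rest : Fin (M' + 1) → X) m))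
      (fun m _ => hf _) (mem_univ 0))
  positivity

end Minibatch

theorem minibatch_weighted_sampling_lower_bound_general
    {X Z₁ Z₂ : Type*} [Fintype X] [Fintype Z₁] [Fintype Z₂]
    (M' : ℕ)
    (q₁ : X → Z₁ → ℝ) (q₂ : X → Z₂ → ℝ)
    (hq₁ : ∀ x, (∀ z, 0 ≤ q₁ x z) ∧ ∑ z : Z₁, q₁ x z = 1)
    (hq₂ : ∀ x, (∀ z, 0 ≤ q₂ x z) ∧ ∑ z : Z₂, q₂ x z = 1) :
    (∑ x : X, ∑ z₁ : Z₁, ∑ z₂ : Z₂,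
        ((Fintype.card X : ℝ)⁻¹ * q₁ x z₁ * q₂ x z₂) *
          Real.log ((Fintype.card X : ℝ)⁻¹ * ∑ x' : X, q₁ x' z₁)
      ≥ ∑ x : X, ∑ z₁ : Z₁, ∑ z₂ : Z₂,
          ((Fintype.card X : ℝ)⁻¹ * q₁ x z₁ * q₂ x z₂) *
            Real.log (∑ rest : Fin M' → X,
              ((Fintype.card X : ℝ)⁻¹) ^ M' *
                (((Fintype.card X : ℝ) * (M' + 1 : ℝ))⁻¹ *
                  ∑ m : Fin (M' + 1), q₁ ((Fin.cons x rest : Fin (M' + 1) → X) m) z₁)))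
    ∧
    (∑ x : X, ∑ z₁ : Z₁, ∑ z₂ : Z₂,
        ((Fintype.card X : ℝ)⁻¹ * q₁ x z₁ * q₂ x z₂) *
          Real.log ((Fintype.card X : ℝ)⁻¹ * ∑ x' : X, q₂ x' z₂)
      ≥ ∑ x : X, ∑ z₁ : Z₁, ∑ z₂ : Z₂,
          ((Fintype.card X : ℝ)⁻¹ * q₁ x z₁ * q₂ x z₂) *
            Real.log (∑ rest : Fin M' → X,
              ((Fintype.card X : ℝ)⁻¹) ^ M' *
                (((Fintype.card X : ℝ) * (M' + 1 : ℝ))⁻¹ *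
                  ∑ m : Fin (M' + 1), q₂ ((Fin.cons x rest : Fin (M' + 1) → X) m) z₂))) := by
  have hw : ∀ x z₁ z₂, 0 ≤ (Fintype.card X : ℝ)⁻¹ * q₁ x z₁ * q₂ x z₂ := fun x z₁ z₂ =>
    mul_nonneg (mul_nonneg (by positivity) ((hq₁ x).1 z₁)) ((hq₂ x).1 z₂)
  constructor
  · refine sum_le_sum fun x _ => sum_le_sum fun z₁ _ => sum_le_sum fun z₂ _ =>
      Real.mul_log_le_mul_log (hw x z₁ z₂) (fun hne => ?_)
        (minibatchEstimate_le M' (fun x' => (hq₁ x').1 z₁) x)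
    exact minibatchEstimate_pos M' (fun x' => (hq₁ x').1 z₁)
      (((hq₁ x).1 z₁).lt_of_ne' fun h => hne (by simp [h]))
  · refine sum_le_sum fun x _ => sum_le_sum fun z₁ _ => sum_le_sum fun z₂ _ =>
      Real.mul_log_le_mul_log (hw x z₁ z₂) (fun hne => ?_)
        (minibatchEstimate_le M' (fun x' => (hq₂ x').1 z₂) x)
    exact minibatchEstimate_pos M' (fun x' => (hq₂ x').1 z₂)
      (((hq₂ x).1 z₂).lt_of_ne' fun h => hne (by simp [h]))

/-- Minibatch weighted sampling lower bound.  The data x is uniform on a finite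
dataset of N points; the posterior factorizes as q(z|x) = q(z₁|x) q(z₂|x).
For n = 1 or 2, E_{q(z,x)}[log q(z_n)] is lower-bounded by
E_{q(z,x)}[ log E_{r(B_M|x)}[ (1/(N M)) ∑_{m=1}^M q(z_n|x_m) ] ], where r(B_M|x)
fixes one minibatch element to x and draws the other M-1 i.i.d. uniformly. -/
theorem minibatch_weighted_sampling_lower_bound
    {X Z₁ Z₂ : Type*} [Fintype X] [Nonempty X] [Fintype Z₁] [Fintype Z₂]
    (M' : ℕ)
    (q₁ : X → Z₁ → ℝ) (q₂ : X → Z₂ → ℝ)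
    (hq₁ : ∀ x, (∀ z, 0 ≤ q₁ x z) ∧ ∑ z : Z₁, q₁ x z = 1)
    (hq₂ : ∀ x, (∀ z, 0 ≤ q₂ x z) ∧ ∑ z : Z₂, q₂ x z = 1) :
    (∑ x : X, ∑ z₁ : Z₁, ∑ z₂ : Z₂,
        ((Fintype.card X : ℝ)⁻¹ * q₁ x z₁ * q₂ x z₂) *
          Real.log ((Fintype.card X : ℝ)⁻¹ * ∑ x' : X, q₁ x' z₁)
      ≥ ∑ x : X, ∑ z₁ : Z₁, ∑ z₂ : Z₂,
          ((Fintype.card X : ℝ)⁻¹ * q₁ x z₁ * q₂ x z₂) *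
            Real.log (∑ rest : Fin M' → X,
              ((Fintype.card X : ℝ)⁻¹) ^ M' *
                (((Fintype.card X : ℝ) * (M' + 1 : ℝ))⁻¹ *
                  ∑ m : Fin (M' + 1), q₁ ((Fin.cons x rest : Fin (M' + 1) → X) m) z₁)))
    ∧
    (∑ x : X, ∑ z₁ : Z₁, ∑ z₂ : Z₂,
        ((Fintype.card X : ℝ)⁻¹ * q₁ x z₁ * q₂ x z₂) *
          Real.log ((Fintype.card X : ℝ)⁻¹ * ∑ x' : X, q₂ x' z₂)
      ≥ ∑ x : X, ∑ z₁ : Z₁, ∑ z₂ : Z₂,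
          ((Fintype.card X : ℝ)⁻¹ * q₁ x z₁ * q₂ x z₂) *
            Real.log (∑ rest : Fin M' → X,
              ((Fintype.card X : ℝ)⁻¹) ^ M' *
                (((Fintype.card X : ℝ) * (M' + 1 : ℝ))⁻¹ *
                  ∑ m : Fin (M' + 1), q₂ ((Fin.cons x rest : Fin (M' + 1) → X) m) z₂))) :=
  minibatch_weighted_sampling_lower_bound_general M' q₁ q₂ hq₁ hq₂
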